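/- arXiv:1403.6884 — 3 statements merged into one kernel-verified Lean document; each statement's English description precedes it below -/
import Mathlib

section
/- Let S be a finite group and let φ : P → φP, ψ : Q → ψQ be isomorphisms between subgroups of S. Define N_{φ,ψ} := {x ∈ S | xPx⁻¹ ≤ Q and ψ ∘ c_x ∘ φ⁻¹ : φP → ψQ is induced by conjugation by some element of S}, where c_x denotes conjugation by x. Then |N_{S×S}((P,φ),(Q,ψ))| = |N_{φ,ψ}| · |C_S(φP)|, where N_{S×S} denotes the transporter of the twisted diagonal (P,φ) into (Q,ψ) in S × S. -/
/-!
`(y, x)` transports the twisted diagonal `(P, φ)` into `(Q, ψ)` exactly when `x` conjugates `P`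
into `Q` and `c_y ∘ φ = ψ ∘ c_x` on `P`. Hence the projection of the transporter to the second
factor lands in `N_{φ,ψ}`, and over `x ∈ N_{φ,ψ}` with `ψ ∘ c_x ∘ φ⁻¹ = c_s` the fibre is
`{y | c_y = c_s on φP}`, the left coset `s · C_S(φP)`.
-/

open Subgroup

theorem conj_eq_conj_iff_inv_mul_mem_centralizer {G : Type*} [Group G] {A : Set G} (s y : G) :
    (∀ a ∈ A, y * a * y⁻¹ = s * a * s⁻¹) ↔ s⁻¹ * y ∈ centralizer A := by
  rw [mem_centralizer_iff]
  refine forall₂_congr fun a _ => ?_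
  rw [mul_inv_eq_iff_eq_mul, mul_assoc s, mul_assoc s, ← inv_mul_eq_iff_eq_mul, ← mul_assoc,
    eq_comm, mul_assoc a]

theorem MonoidHom.mk_mem_range_prod_subtype_iff {G H : Type*} [Group G] [Group H]
    {Q : Subgroup H} (ψ : Q →* G) (g : G) (h : H) :
    (g, h) ∈ (ψ.prod Q.subtype).range ↔ ∃ hh : h ∈ Q, ψ ⟨h, hh⟩ = g := by
  constructor
  · rintro ⟨q, hq⟩
    obtain ⟨rfl, rfl⟩ := Prod.ext_iff.mp hq
    exact ⟨q.2, rfl⟩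
  · rintro ⟨hh, rfl⟩
    exact ⟨⟨h, hh⟩, rfl⟩

theorem forall_conj_mem_range_prod_subtype_iff {G : Type*} [Group G] {P Q : Subgroup G}
    (φ : P →* G) (ψ : Q →* G) (y x : G) :
    (∀ d ∈ (φ.prod P.subtype).range, (y, x) * d * (y, x)⁻¹ ∈ (ψ.prod Q.subtype).range) ↔
      ∀ p : P, ∃ hq : x * p * x⁻¹ ∈ Q, ψ ⟨x * p * x⁻¹, hq⟩ = y * φ p * y⁻¹ := by
  simp only [MonoidHom.mem_range (f := φ.prod P.subtype), forall_exists_index,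
    forall_apply_eq_imp_iff]
  exact forall_congr' fun p => MonoidHom.mk_mem_range_prod_subtype_iff ψ _ _

theorem Nat.card_eq_card_mul_card_of_fiber_eq_leftCoset {G X : Type*} [Group G]
    {T : Set (G × X)} {N : Set X} (C : Subgroup G) (hTN : ∀ y x, (y, x) ∈ T → x ∈ N)
    (hfiber : ∀ x ∈ N, ∃ s : G, ∀ y, (y, x) ∈ T ↔ s⁻¹ * y ∈ C) :
    Nat.card T = Nat.card N * Nat.card C := by
  choose s hs using hfiber
  rw [← Nat.card_prod]
  exact Nat.card_congr
    { toFun z := (⟨z.1.2, hTN _ _ z.2⟩, ⟨(s _ (hTN _ _ z.2))⁻¹ * z.1.1, (hs _ _ _).1 z.2⟩)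
      invFun w := ⟨(s w.1 w.1.2 * w.2, w.1), (hs w.1 w.1.2 _).2 (by simp)⟩
      left_inv z := Subtype.ext (Prod.ext (mul_inv_cancel_left _ _) rfl)
      right_inv w := Prod.ext rfl (Subtype.ext (inv_mul_cancel_left _ _)) }

theorem stmt5_general (S : Type) [Group S]
    (P P' Q Q' : Subgroup S) (e : ↥P ≃* ↥P') (f : ↥Q ≃* ↥Q') :
    Nat.card {x : S × S |
        ∀ d ∈ ((P'.subtype.comp e.toMonoidHom).prod P.subtype).range,
          x * d * x⁻¹ ∈ ((Q'.subtype.comp f.toMonoidHom).prod Q.subtype).range}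
      = Nat.card {x : S | (∀ a ∈ P, x * a * x⁻¹ ∈ Q) ∧
          ∃ s : S, ∀ (a : ↥P) (h : x * (a : S) * x⁻¹ ∈ Q),
            ((f ⟨x * (a : S) * x⁻¹, h⟩ : ↥Q') : S) = s * ((e a : ↥P') : S) * s⁻¹}
        * Nat.card (Subgroup.centralizer (P' : Set S)) := by
  refine Nat.card_eq_card_mul_card_of_fiber_eq_leftCoset _ (fun y x hyx => ?_) ?_
  · rw [Set.mem_ofPred_eq, forall_conj_mem_range_prod_subtype_iff] at hyx
    exact ⟨fun a ha => (hyx ⟨a, ha⟩).1, y, fun a _ => (hyx a).2⟩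
  · rintro x ⟨hxPQ, s, hs⟩
    refine ⟨s, fun y => ?_⟩
    rw [Set.mem_ofPred_eq, forall_conj_mem_range_prod_subtype_iff,
      ← conj_eq_conj_iff_inv_mul_mem_centralizer]
    calc (∀ p : P, ∃ hq, (f ⟨x * p * x⁻¹, hq⟩ : S) = y * e p * y⁻¹)
        ↔ ∀ p : P, y * e p * y⁻¹ = s * e p * s⁻¹ := forall_congr' fun p => by
          rw [exists_prop_of_true (hxPQ p p.2), hs, eq_comm]
      _ ↔ ∀ a ∈ (P' : Set S), y * a * y⁻¹ = s * a * s⁻¹ :=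
          (e.surjective.forall (p := fun a : P' => y * a * y⁻¹ = s * a * s⁻¹)).symm.trans
            Subtype.forall

/-- For isomorphisms `φ : P → P'` and `ψ : Q → Q'` between subgroups of a
finite group `S`, with `N_{φ,ψ} = {x ∈ S | xPx⁻¹ ≤ Q and ψ∘c_x∘φ⁻¹ is induced by
conjugation by some element of S}`, one has
`|N_{S×S}((P,φ),(Q,ψ))| = |N_{φ,ψ}| · |C_S(φP)|`. -/
theorem stmt5 (S : Type) [Group S] [Fintype S]
    (P P' Q Q' : Subgroup S) (e : ↥P ≃* ↥P') (f : ↥Q ≃* ↥Q') :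
    Nat.card {x : S × S |
        ∀ d ∈ ((P'.subtype.comp e.toMonoidHom).prod P.subtype).range,
          x * d * x⁻¹ ∈ ((Q'.subtype.comp f.toMonoidHom).prod Q.subtype).range}
      = Nat.card {x : S | (∀ a ∈ P, x * a * x⁻¹ ∈ Q) ∧
          ∃ s : S, ∀ (a : ↥P) (h : x * (a : S) * x⁻¹ ∈ Q),
            ((f ⟨x * (a : S) * x⁻¹, h⟩ : ↥Q') : S) = s * ((e a : ↥P') : S) * s⁻¹}
        * Nat.card (Subgroup.centralizer (P' : Set S)) :=
  stmt5_general S P P' Q Q' e f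
end

section
/- Let S be a finite p-group and F a saturated fusion system on S. If P ≤ S and ι_P : P → S is the inclusion, then the twisted diagonal (P, ι_P) ≤ S × S is fully normalized in the product fusion system F × F if and only if P is fully F-normalized; moreover |N_{S×S}((P,ι_P))| = |N_S(P)| · |C_S(P)|. -/
/-!
A pair `(x, y)` normalizes the diagonal `Δ_P` iff `x ∈ N_S(P)` and `x⁻¹y ∈ C_S(P)`, whence
`|N(Δ_P)| = |N_S(P)|·|C_S(P)|`. An `F × F`-conjugate of `Δ_P` has the form
`R = {(φa, ψa) | a ∈ P}`; projecting `N(R)` to the first factor lands in `N_S(φP)` with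
kernel inside `{1} × C_S(ψP)` (as `φ` is injective), so `|N(R)| ≤ |N_S(φP)|·|C_S(ψP)|`.
Since saturation makes fully normalized subgroups fully centralized, both factors are maximal
when `P` is fully normalized. Conversely, comparing `Δ_P` with `Δ_Q` for a fully normalized
conjugate `Q` of `P` and using `|C_S(P)| ≤ |C_S(Q)|` gives `|N_S(Q)| ≤ |N_S(P)|`.
-/

/-- A fusion system on a group `S`, encoded via partial maps: `Mor P f` asserts that the
restriction of `f : S → S` to the subgroup `P ≤ S` is a morphism of the fusion system,
i.e. an injective group homomorphism from `P` into `S`. -/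
structure FusionSystem (S : Type) [Group S] where
  /-- `Mor P f`: the restriction of `f` to `P` is a morphism `P → S` of the fusion system. -/
  Mor : Subgroup S → (S → S) → Prop
  mul_on : ∀ {P : Subgroup S} {f : S → S}, Mor P f → ∀ x ∈ P, ∀ y ∈ P, f (x * y) = f x * f y
  inj_on : ∀ {P : Subgroup S} {f : S → S}, Mor P f → Set.InjOn f (P : Set S)
  /-- Every homomorphism induced by conjugation in `S` is a morphism. -/
  conj_mem : ∀ (P : Subgroup S) (s : S), Mor P fun x => s * x * s⁻¹
  /-- Morphisms are closed under composition. -/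
  comp_mem : ∀ {P Q : Subgroup S} {f g : S → S}, Mor P f → Mor Q g →
      (∀ x ∈ P, f x ∈ Q) → Mor P (g ∘ f)
  /-- The inverse of the isomorphism onto the image is again a morphism. -/
  inv_mem : ∀ {P : Subgroup S} {f : S → S} (Q : Subgroup S), Mor P f →
      (Q : Set S) = f '' (P : Set S) → ∃ g : S → S, Mor Q g ∧ ∀ x ∈ P, g (f x) = x
  /-- Morphisms restrict to subgroups. -/
  restrict_mem : ∀ {P : Subgroup S} {f : S → S} (Q : Subgroup S), Q ≤ P → Mor P f → Mor Q f

namespace FusionSystem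

variable {S : Type} [Group S] (F : FusionSystem S)

/-- Two subgroups are `F`-conjugate if some morphism of `F` maps one onto the other. -/
def IsConj (P Q : Subgroup S) : Prop :=
  ∃ f : S → S, F.Mor P f ∧ f '' (P : Set S) = (Q : Set S)

/-- `P` is fully `F`-normalized: its normalizer has maximal order in its `F`-class. -/
def FullyNormalized (P : Subgroup S) : Prop :=
  ∀ Q : Subgroup S, F.IsConj P Q → Nat.card (Subgroup.normalizer (Q : Set S)) ≤ Nat.card (Subgroup.normalizer (P : Set S))

/-- `P` is fully `F`-centralized: its centralizer has maximal order in its `F`-class. -/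
def FullyCentralized (P : Subgroup S) : Prop :=
  ∀ Q : Subgroup S, F.IsConj P Q →
    Nat.card (Subgroup.centralizer (Q : Set S)) ≤ Nat.card (Subgroup.centralizer (P : Set S))

/-- `P` is `F`-centric: every `F`-conjugate of `P` contains its own `S`-centralizer. -/
def Centric (P : Subgroup S) : Prop :=
  ∀ Q : Subgroup S, F.IsConj P Q → (Subgroup.centralizer (Q : Set S) : Set S) ⊆ (Q : Set S)

/-- Saturation of a fusion system at the prime `p`: (I) fully normalized subgroups are fully
centralized and their `S`-automorphisms have index prime to `p` among their
`F`-automorphisms (the Sylow axiom); (II) the extension axiom: a morphism with fully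
centralized image extends to its extender `N_φ`. -/
def Saturated (p : ℕ) : Prop :=
  (∀ P : Subgroup S, F.FullyNormalized P →
    F.FullyCentralized P ∧
      ¬ p ∣ (Set.ncard {g : ↥P → S | ∃ f : S → S, F.Mor P f ∧
              f '' (P : Set S) = (P : Set S) ∧ ∀ x : ↥P, g x = f (x : S)} /
        Set.ncard {g : ↥P → S | ∃ s ∈ Subgroup.normalizer (P : Set S), ∀ x : ↥P, g x = s * (x : S) * s⁻¹})) ∧
  (∀ (P : Subgroup S) (f : S → S), F.Mor P f →
    (∀ Q : Subgroup S, (Q : Set S) = f '' (P : Set S) → F.FullyCentralized Q) →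
    ∃ (R : Subgroup S) (g : S → S), F.Mor R g ∧ P ≤ R ∧ (∀ x ∈ P, g x = f x) ∧
      (R : Set S) = {x : S | x ∈ Subgroup.normalizer (P : Set S) ∧
        ∃ y : S, ∀ q ∈ P, f (x * q * x⁻¹) = y * f q * y⁻¹})

/-- A morphism of `F` defined on `P` is nonextendable if it admits no extension to a strictly
larger subgroup. -/
def Nonextendable (P : Subgroup S) (f : S → S) : Prop :=
  F.Mor P f ∧ ∀ (R : Subgroup S) (g : S → S), P ≤ R → F.Mor R g →
    (∀ x ∈ P, g x = f x) → R = P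

end FusionSystem

namespace Subgroup

variable {G H : Type*} [Group G] [Group H]

theorem card_normalizer_le_of_fst_injective [Finite G] [Finite H] (R : Subgroup (G × H))
    (hR : ∀ b : H, ((1 : G), b) ∈ R → b = 1) :
    Nat.card (normalizer (R : Set (G × H))) ≤
      Nat.card (normalizer (R.map (MonoidHom.fst G H) : Set G)) *
        Nat.card (centralizer (R.map (MonoidHom.snd G H) : Set H)) := by
  set φ := (MonoidHom.fst G H).comp (normalizer (R : Set (G × H))).subtype
  have hrange : φ.range ≤ normalizer (R.map (MonoidHom.fst G H) : Set G) := by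
    rw [MonoidHom.range_comp, range_subtype]
    exact le_normalizer_map _
  have hker (k : φ.ker) : (k : G × H).2 ∈ centralizer (R.map (MonoidHom.snd G H) : Set H) := by
    obtain ⟨⟨⟨x, y⟩, hk⟩, hx : x = 1⟩ := k
    subst hx
    rintro _ ⟨⟨a, b⟩, hab, rfl⟩
    have hconj : ((1 : G), y) * (a, b) * (1, y)⁻¹ ∈ R := (hk _).1 hab
    have hcomm : b⁻¹ * (y * b * y⁻¹) = 1 :=
      hR _ (by simpa using R.mul_mem (R.inv_mem hab) hconj)
    show b * y = y * b
    rw [inv_mul_eq_one] at hcomm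
    nth_rewrite 1 [hcomm]
    group
  have hinj :
      Function.Injective fun k : φ.ker => (⟨(k : G × H).2, hker k⟩ : centralizer _) := by
    rintro ⟨⟨k, _⟩, hk : k.1 = 1⟩ ⟨⟨l, _⟩, hl : l.1 = 1⟩ hkl
    simp only [Subtype.mk.injEq] at hkl
    exact Subtype.ext (Subtype.ext (Prod.ext (hk.trans hl.symm) hkl))
  rw [← φ.ker.card_mul_index, index_ker, mul_comm]
  exact Nat.mul_le_mul (card_le_of_le hrange) (Nat.card_le_card_of_injective _ hinj)

def diagonal (P : Subgroup G) : Subgroup (G × G) where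
  carrier := {z | z.1 = z.2 ∧ z.2 ∈ P}
  mul_mem' := by
    rintro _ _ ⟨hx, hxP⟩ ⟨hy, hyP⟩
    exact ⟨congrArg₂ (· * ·) hx hy, P.mul_mem hxP hyP⟩
  one_mem' := ⟨rfl, P.one_mem⟩
  inv_mem' := by
    rintro _ ⟨hx, hxP⟩
    exact ⟨congrArg (·⁻¹) hx, P.inv_mem hxP⟩

variable {P : Subgroup G}

@[simp]
theorem mem_diagonal {z : G × G} : z ∈ P.diagonal ↔ z.1 = z.2 ∧ z.2 ∈ P := Iff.rfl

theorem coe_diagonal : (P.diagonal : Set (G × G)) = (fun a => (a, a)) '' P := by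
  ext ⟨a, b⟩
  simp only [SetLike.mem_coe, mem_diagonal, Set.mem_image, Prod.mk.injEq]
  constructor
  · rintro ⟨rfl, ha⟩
    exact ⟨a, ha, rfl, rfl⟩
  · rintro ⟨c, hc, rfl, rfl⟩
    exact ⟨rfl, hc⟩

theorem map_fst_diagonal : P.diagonal.map (MonoidHom.fst G G) = P := by
  ext; simp

theorem map_snd_diagonal : P.diagonal.map (MonoidHom.snd G G) = P := by
  ext; simp

theorem mk_mul_mem_normalizer_diagonal [Finite G] {x c : G} (hx : x ∈ normalizer (P : Set G))
    (hc : c ∈ centralizer (P : Set G)) :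
    (x, x * c) ∈ normalizer (P.diagonal : Set (G × G)) := by
  refine mem_normalizer_fintype ?_
  rintro ⟨a, b⟩ ⟨hab, ha⟩
  obtain rfl : a = b := hab
  have hca : c * a * c⁻¹ = a := mul_inv_eq_of_eq_mul (mem_centralizer_iff.1 hc a ha).symm
  have hconj : x * c * a * (x * c)⁻¹ = x * a * x⁻¹ := by
    conv_rhs => rw [← hca]
    group
  exact ⟨hconj.symm, (hconj ▸ (hx a).1 ha : x * c * a * (x * c)⁻¹ ∈ P)⟩

theorem card_normalizer_diagonal [Finite G] (P : Subgroup G) :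
    Nat.card (normalizer (P.diagonal : Set (G × G))) =
      Nat.card (normalizer (P : Set G)) * Nat.card (centralizer (P : Set G)) := by
  refine le_antisymm ?_ ?_
  · simpa only [map_fst_diagonal, map_snd_diagonal] using
      card_normalizer_le_of_fst_injective P.diagonal fun b hb => (mem_diagonal.1 hb).1.symm
  · rw [← Nat.card_prod]
    refine Nat.card_le_card_of_injective
      (fun w => ⟨(w.1, w.1 * w.2), mk_mul_mem_normalizer_diagonal w.1.2 w.2.2⟩) ?_
    rintro ⟨⟨x, _⟩, ⟨c, _⟩⟩ ⟨⟨y, _⟩, ⟨d, _⟩⟩ h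
    simp only [Subtype.mk.injEq, Prod.mk.injEq] at h ⊢
    obtain ⟨rfl, hcd⟩ := h
    exact ⟨rfl, mul_left_cancel hcd⟩

end Subgroup

namespace FusionSystem

variable {S : Type} [Group S] (F : FusionSystem S)

theorem map_one {P : Subgroup S} {f : S → S} (hf : F.Mor P f) : f 1 = 1 := by
  have h := F.mul_on hf 1 P.one_mem 1 P.one_mem
  rw [mul_one] at h
  exact mul_eq_left.1 h.symm

theorem isConj_refl (P : Subgroup S) : F.IsConj P P :=
  ⟨_, F.conj_mem P 1, by simp⟩

theorem isConj_symm {P Q : Subgroup S} (h : F.IsConj P Q) : F.IsConj Q P := by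
  obtain ⟨f, hf, hfP⟩ := h
  obtain ⟨g, hg, hgf⟩ := F.inv_mem Q hf hfP.symm
  refine ⟨g, hg, ?_⟩
  rw [← hfP, ← Set.image_comp]
  exact (Set.image_congr hgf).trans (Set.image_id' _)

theorem isConj_trans {P Q R : Subgroup S} (hPQ : F.IsConj P Q) (hQR : F.IsConj Q R) :
    F.IsConj P R := by
  obtain ⟨f, hf, hfP⟩ := hPQ
  obtain ⟨g, hg, hgQ⟩ := hQR
  refine ⟨g ∘ f, F.comp_mem hf hg fun x hx => ?_, by rw [Set.image_comp, hfP, hgQ]⟩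
  rw [← SetLike.mem_coe, ← hfP]
  exact Set.mem_image_of_mem f hx

theorem exists_isConj_fullyNormalized [Finite S] (P : Subgroup S) :
    ∃ Q, F.IsConj P Q ∧ F.FullyNormalized Q := by
  have : Nonempty {Q // F.IsConj P Q} := ⟨⟨P, F.isConj_refl P⟩⟩
  obtain ⟨⟨Q, hPQ⟩, hQ⟩ :=
    Finite.exists_max fun Q : {Q // F.IsConj P Q} => Nat.card (Subgroup.normalizer (Q.1 : Set S))
  exact ⟨Q, hPQ, fun R hQR => hQ ⟨R, F.isConj_trans hPQ hQR⟩⟩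

/-- `R` is the image of `D` under a morphism `(f, g)` of the product fusion system `F × F`. -/
def ProdIsConj (D R : Subgroup (S × S)) : Prop :=
  ∃ (A B : Subgroup S) (f g : S → S), F.Mor A f ∧ F.Mor B g ∧
    (D : Set (S × S)) ⊆ (A : Set S) ×ˢ (B : Set S) ∧
    Prod.map f g '' (D : Set (S × S)) = (R : Set (S × S))

def ProdFullyNormalized (D : Subgroup (S × S)) : Prop :=
  ∀ R : Subgroup (S × S), F.ProdIsConj D R →
    Nat.card (Subgroup.normalizer (R : Set (S × S))) ≤
      Nat.card (Subgroup.normalizer (D : Set (S × S)))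

variable {F}

theorem ProdIsConj.exists_card_normalizer_le [Finite S] {P : Subgroup S} {R : Subgroup (S × S)}
    (hR : F.ProdIsConj P.diagonal R) :
    ∃ Q₁ Q₂ : Subgroup S, F.IsConj P Q₁ ∧ F.IsConj P Q₂ ∧
      Nat.card (Subgroup.normalizer (R : Set (S × S))) ≤
        Nat.card (Subgroup.normalizer (Q₁ : Set S)) *
          Nat.card (Subgroup.centralizer (Q₂ : Set S)) := by
  obtain ⟨A, B, f, g, hf, hg, hsub, hR⟩ := hR
  have hdiag {a : S} (ha : a ∈ P) : (a, a) ∈ (P.diagonal : Set (S × S)) := ⟨rfl, ha⟩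
  have hfP := F.restrict_mem P (fun a ha => (hsub (hdiag ha)).1) hf
  have hgP := F.restrict_mem P (fun a ha => (hsub (hdiag ha)).2) hg
  have hRP : (R : Set (S × S)) = (fun a => (f a, g a)) '' P := by
    rw [← hR, Subgroup.coe_diagonal, Set.image_image]
    rfl
  refine ⟨R.map (MonoidHom.fst S S), R.map (MonoidHom.snd S S),
    ⟨f, hfP, by rw [Subgroup.coe_map, hRP, Set.image_image]; rfl⟩,
    ⟨g, hgP, by rw [Subgroup.coe_map, hRP, Set.image_image]; rfl⟩,
    Subgroup.card_normalizer_le_of_fst_injective R fun b hb => ?_⟩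
  rw [← SetLike.mem_coe, hRP] at hb
  obtain ⟨a, ha, hab⟩ := hb
  obtain ⟨hfa, rfl⟩ := Prod.mk.inj hab
  rw [F.inj_on hfP ha P.one_mem (hfa.trans (F.map_one hfP).symm), F.map_one hgP]

theorem IsConj.prodIsConj_diagonal {P Q : Subgroup S} (h : F.IsConj P Q) :
    F.ProdIsConj P.diagonal Q.diagonal := by
  obtain ⟨f, hf, hfP⟩ := h
  refine ⟨P, P, f, f, hf, hf, fun z ⟨hz, hzP⟩ => ⟨hz ▸ hzP, hzP⟩, ?_⟩
  rw [Subgroup.coe_diagonal, Subgroup.coe_diagonal, Set.image_image, ← hfP, Set.image_image]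
  rfl

theorem prodFullyNormalized_diagonal_iff [Finite S]
    (hFC : ∀ Q : Subgroup S, F.FullyNormalized Q → F.FullyCentralized Q) (P : Subgroup S) :
    F.ProdFullyNormalized P.diagonal ↔ F.FullyNormalized P := by
  constructor
  · intro hΔ
    obtain ⟨Q, hPQ, hQ⟩ := F.exists_isConj_fullyNormalized P
    have hNC := hΔ _ hPQ.prodIsConj_diagonal
    rw [Subgroup.card_normalizer_diagonal, Subgroup.card_normalizer_diagonal] at hNC
    have hC := hFC Q hQ P (F.isConj_symm hPQ)
    have hN :
        Nat.card (Subgroup.normalizer (Q : Set S)) ≤ Nat.card (Subgroup.normalizer (P : Set S)) :=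
      Nat.le_of_mul_le_mul_right (hNC.trans' (Nat.mul_le_mul_left _ hC)) Nat.card_pos
    exact fun R hPR => (hQ R (F.isConj_trans (F.isConj_symm hPQ) hPR)).trans hN
  · intro hP R hR
    obtain ⟨Q₁, Q₂, h₁, h₂, hle⟩ := hR.exists_card_normalizer_le
    rw [Subgroup.card_normalizer_diagonal]
    exact hle.trans (Nat.mul_le_mul (hP Q₁ h₁) (hFC P hP Q₂ h₂))

end FusionSystem

theorem stmt12_general (p : ℕ) (S : Type) [Group S] [Fintype S]
    (F : FusionSystem S) (hF : F.Saturated p)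
    (P : Subgroup S) (Δ : Subgroup (S × S))
    (hΔ : (Δ : Set (S × S)) = {z : S × S | z.1 = z.2 ∧ z.2 ∈ P}) :
    ((∀ R : Subgroup (S × S),
        (∃ (A B : Subgroup S) (f g : S → S), F.Mor A f ∧ F.Mor B g ∧
          (Δ : Set (S × S)) ⊆ (A : Set S) ×ˢ (B : Set S) ∧
          Prod.map f g '' (Δ : Set (S × S)) = (R : Set (S × S))) →
        Nat.card (Subgroup.normalizer (R : Set (S × S))) ≤ Nat.card (Subgroup.normalizer (Δ : Set (S × S)))) ↔ F.FullyNormalized P) ∧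
    Nat.card (Subgroup.normalizer (Δ : Set (S × S)))
      = Nat.card (Subgroup.normalizer (P : Set S)) * Nat.card (Subgroup.centralizer (P : Set S)) := by
  obtain rfl : Δ = P.diagonal := SetLike.coe_injective hΔ
  exact ⟨F.prodFullyNormalized_diagonal_iff (fun Q hQ => (hF.1 Q hQ).1) P,
    Subgroup.card_normalizer_diagonal P⟩

/-- Let `F` be a saturated fusion system on a finite `p`-group `S`, `P ≤ S`,
and `Δ = (P, ι_P) = {(a,a) | a ∈ P} ≤ S × S` the diagonal.  Then `Δ` is fully normalized in
the product fusion system `F × F` (whose conjugation maps are restrictions of pairs of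
`F`-morphisms) iff `P` is fully `F`-normalized; moreover
`|N_{S×S}((P,ι_P))| = |N_S(P)| · |C_S(P)|`. -/
theorem stmt12 (p : ℕ) (hp : p.Prime) (S : Type) [Group S] [Fintype S]
    (hS : IsPGroup p S) (F : FusionSystem S) (hF : F.Saturated p)
    (P : Subgroup S) (Δ : Subgroup (S × S))
    (hΔ : (Δ : Set (S × S)) = {z : S × S | z.1 = z.2 ∧ z.2 ∈ P}) :
    ((∀ R : Subgroup (S × S),
        (∃ (A B : Subgroup S) (f g : S → S), F.Mor A f ∧ F.Mor B g ∧
          (Δ : Set (S × S)) ⊆ (A : Set S) ×ˢ (B : Set S) ∧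
          Prod.map f g '' (Δ : Set (S × S)) = (R : Set (S × S))) →
        Nat.card (Subgroup.normalizer (R : Set (S × S))) ≤ Nat.card (Subgroup.normalizer (Δ : Set (S × S)))) ↔ F.FullyNormalized P) ∧
    Nat.card (Subgroup.normalizer (Δ : Set (S × S)))
      = Nat.card (Subgroup.normalizer (P : Set S)) * Nat.card (Subgroup.centralizer (P : Set S)) :=
  stmt12_general p S F hF P Δ hΔ
end

section
/- Let S be a finite group, Ω an (S,S)-biset, P ≤ S a subgroup, and K ≤ Aut(P) a subgroup of automorphisms of P. Define the K-normalizer N_S^K(P) = {n ∈ N_S(P) | c_n|_P ∈ K} and N_Ω^K(P) = {ω ∈ Ω | Stab_{S×S}(ω) = (Q,ψ) with P ≤ Q, ψ(P) = P, ψ|_P ∈ K} (for a bifree Ω where all stabilizers are twisted diagonals). Then N_Ω^K(P) is closed under left and right multiplication by elements of N_S^K(P), so it is an (N_S^K(P), N_S^K(P))-biset. -/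
/-!
Moving `ω` to `n·ω·m` conjugates its twisted-diagonal stabilizer `(Q, ψ)` into
`(m⁻¹Qm, c_n ∘ ψ ∘ c_m)`. When `c_n|_P` and `c_m|_P` lie in `K`, so does the restriction of
`c_n ∘ ψ ∘ c_m` to `P`, being a product of three elements of `K`; in particular it maps `P`
onto `P`, and `c_m` maps `P` into `P ≤ Q`.
-/

/-- `l a ω = a·ω` and `r a ω = ω·a`. -/
structure IsBiset {S Ω : Type*} [Group S] (l r : S → Ω → Ω) : Prop where
  l_one : ∀ ω, l 1 ω = ω
  l_mul : ∀ a b ω, l (a * b) ω = l a (l b ω)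
  r_one : ∀ ω, r 1 ω = ω
  r_mul : ∀ a b ω, r (a * b) ω = r b (r a ω)
  comm : ∀ a b ω, l a (r b ω) = r b (l a ω)

/-- `Stab_{S×S}(ω)` is the twisted diagonal `{(ψ a, a) | a ∈ Q}`. -/
def HasTwistedStabilizer {S Ω : Type*} [Group S] (l r : S → Ω → Ω) (ω : Ω) (Q : Subgroup S)
    (ψ : S → S) : Prop :=
  ∀ b a : S, l b ω = r a ω ↔ a ∈ Q ∧ b = ψ a

namespace IsBiset

variable {S Ω : Type*} [Group S] {l r : S → Ω → Ω}

theorem l_inv_l (h : IsBiset l r) (a : S) (x : Ω) : l a⁻¹ (l a x) = x := by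
  rw [← h.l_mul, inv_mul_cancel, h.l_one]

theorem r_inv_r (h : IsBiset l r) (a : S) (x : Ω) : r a⁻¹ (r a x) = x := by
  rw [← h.r_mul, mul_inv_cancel, h.r_one]

theorem injective_l_r (h : IsBiset l r) (n m : S) : Function.Injective fun x => l n (r m x) :=
  fun x y hxy => by simpa only [h.l_inv_l, h.r_inv_r] using congrArg (fun z => r m⁻¹ (l n⁻¹ z)) hxy

theorem l_l_r (h : IsBiset l r) (b n m : S) (x : Ω) :
    l b (l n (r m x)) = l n (r m (l (n⁻¹ * b * n) x)) := by
  rw [← h.comm, ← h.l_mul, ← h.l_mul, mul_assoc, mul_inv_cancel_left]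

theorem r_l_r (h : IsBiset l r) (a n m : S) (x : Ω) :
    r a (l n (r m x)) = l n (r m (r (m * a * m⁻¹) x)) := by
  rw [← h.comm, ← h.r_mul, ← h.r_mul, inv_mul_cancel_right]

theorem hasTwistedStabilizer_l_r (h : IsBiset l r) {ω : Ω} {Q : Subgroup S} {ψ : S → S}
    (hω : HasTwistedStabilizer l r ω Q ψ) (n m : S) :
    HasTwistedStabilizer l r (l n (r m ω)) (Q.comap (MulAut.conj m).toMonoidHom)
      (fun a => n * ψ (m * a * m⁻¹) * n⁻¹) := by
  intro b a
  rw [h.l_l_r, h.r_l_r, (h.injective_l_r n m).eq_iff, hω]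
  refine and_congr Iff.rfl ⟨fun hb => ?_, fun hb => ?_⟩ <;> dsimp only at hb ⊢
  · rw [← hb]; group
  · rw [hb]; group

end IsBiset

def RestrictsToMem {S : Type*} [Group S] {P : Subgroup S} (K : Subgroup (MulAut P))
    (f : S → S) : Prop :=
  ∃ κ ∈ K, ∀ a : P, f a = κ a

namespace RestrictsToMem

variable {S : Type*} [Group S] {P : Subgroup S} {K : Subgroup (MulAut P)} {f g : S → S}

theorem comp (hf : RestrictsToMem K f) (hg : RestrictsToMem K g) : RestrictsToMem K (f ∘ g) := by
  obtain ⟨κf, hκf, hf⟩ := hf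
  obtain ⟨κg, hκg, hg⟩ := hg
  exact ⟨κf * κg, mul_mem hκf hκg, fun a => by simp only [Function.comp_apply, hg, hf]; rfl⟩

theorem mem (hf : RestrictsToMem K f) {a : S} (ha : a ∈ P) : f a ∈ P := by
  obtain ⟨κ, -, hκ⟩ := hf
  exact hκ ⟨a, ha⟩ ▸ (κ ⟨a, ha⟩).2

theorem image_eq (hf : RestrictsToMem K f) : f '' P = P := by
  refine (Set.image_subset_iff.2 fun _ ha => hf.mem ha).antisymm fun x hx => ?_
  obtain ⟨κ, -, hκ⟩ := hf
  exact ⟨κ⁻¹ ⟨x, hx⟩, (κ⁻¹ ⟨x, hx⟩).2, (hκ _).trans (congrArg Subtype.val (MulAut.apply_inv_self _ κ _))⟩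

end RestrictsToMem

theorem stmt18_general (S Ω : Type) [Group S]
    (l r : S → Ω → Ω)
    (l_one : ∀ ω, l 1 ω = ω) (l_mul : ∀ a b ω, l (a * b) ω = l a (l b ω))
    (r_one : ∀ ω, r 1 ω = ω) (r_mul : ∀ a b ω, r (a * b) ω = r b (r a ω))
    (hcomm : ∀ a b ω, l a (r b ω) = r b (l a ω))
    (P : Subgroup S) (K : Subgroup (MulAut ↥P)) :
    ∀ n ∈ {x : S | x ∈ Subgroup.normalizer (P : Set S) ∧ ∃ κ ∈ K, ∀ a : ↥P, x * (a : S) * x⁻¹ = ((κ a : ↥P) : S)},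
    ∀ m ∈ {x : S | x ∈ Subgroup.normalizer (P : Set S) ∧ ∃ κ ∈ K, ∀ a : ↥P, x * (a : S) * x⁻¹ = ((κ a : ↥P) : S)},
    ∀ ω ∈ {ω : Ω | ∃ (Q : Subgroup S) (ψ : S → S),
        (∀ b a : S, l b ω = r a ω ↔ a ∈ Q ∧ b = ψ a) ∧
        P ≤ Q ∧ ψ '' (P : Set S) = (P : Set S) ∧
        ∃ κ ∈ K, ∀ a : ↥P, ψ (a : S) = ((κ a : ↥P) : S)},
      l n (r m ω) ∈ {ω : Ω | ∃ (Q : Subgroup S) (ψ : S → S),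
        (∀ b a : S, l b ω = r a ω ↔ a ∈ Q ∧ b = ψ a) ∧
        P ≤ Q ∧ ψ '' (P : Set S) = (P : Set S) ∧
        ∃ κ ∈ K, ∀ a : ↥P, ψ (a : S) = ((κ a : ↥P) : S)} := by
  rintro n ⟨-, (hn : RestrictsToMem K fun a => n * a * n⁻¹)⟩
    m ⟨-, (hm : RestrictsToMem K fun a => m * a * m⁻¹)⟩ ω ⟨Q, ψ, hω, hPQ, -, hψ⟩
  have hbiset : IsBiset l r := ⟨l_one, l_mul, r_one, r_mul, hcomm⟩
  have hψ' : RestrictsToMem K fun a => n * ψ (m * a * m⁻¹) * n⁻¹ := (hn.comp hψ).comp hm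
  exact ⟨_, _, hbiset.hasTwistedStabilizer_l_r hω n m,
    fun _ ha => hPQ (hm.mem ha), hψ'.image_eq, hψ'⟩

/-- Let `Ω` be a bifree `(S,S)`-biset (so point-stabilizers are twisted
diagonals), `P ≤ S` and `K ≤ Aut(P)`.  With `N_S^K(P) = {n ∈ N_S(P) | c_n|_P ∈ K}` and
`N_Ω^K(P) = {ω | Stab(ω) = (Q,ψ), P ≤ Q, ψP = P, ψ|_P ∈ K}`, the set `N_Ω^K(P)` is closed
under left and right multiplication by elements of `N_S^K(P)`. -/
theorem stmt18 (S Ω : Type) [Group S] [Fintype S] [Fintype Ω]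
    (l r : S → Ω → Ω)
    (l_one : ∀ ω, l 1 ω = ω) (l_mul : ∀ a b ω, l (a * b) ω = l a (l b ω))
    (r_one : ∀ ω, r 1 ω = ω) (r_mul : ∀ a b ω, r (a * b) ω = r b (r a ω))
    (hcomm : ∀ a b ω, l a (r b ω) = r b (l a ω))
    (l_free : ∀ a ω, l a ω = ω → a = 1)
    (r_free : ∀ a ω, r a ω = ω → a = 1)
    (P : Subgroup S) (K : Subgroup (MulAut ↥P)) :
    ∀ n ∈ {x : S | x ∈ Subgroup.normalizer (P : Set S) ∧ ∃ κ ∈ K, ∀ a : ↥P, x * (a : S) * x⁻¹ = ((κ a : ↥P) : S)},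
    ∀ m ∈ {x : S | x ∈ Subgroup.normalizer (P : Set S) ∧ ∃ κ ∈ K, ∀ a : ↥P, x * (a : S) * x⁻¹ = ((κ a : ↥P) : S)},
    ∀ ω ∈ {ω : Ω | ∃ (Q : Subgroup S) (ψ : S → S),
        (∀ b a : S, l b ω = r a ω ↔ a ∈ Q ∧ b = ψ a) ∧
        P ≤ Q ∧ ψ '' (P : Set S) = (P : Set S) ∧
        ∃ κ ∈ K, ∀ a : ↥P, ψ (a : S) = ((κ a : ↥P) : S)},
      l n (r m ω) ∈ {ω : Ω | ∃ (Q : Subgroup S) (ψ : S → S),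
        (∀ b a : S, l b ω = r a ω ↔ a ∈ Q ∧ b = ψ a) ∧
        P ≤ Q ∧ ψ '' (P : Set S) = (P : Set S) ∧
        ∃ κ ∈ K, ∀ a : ↥P, ψ (a : S) = ((κ a : ↥P) : S)} :=
  stmt18_general S Ω l r l_one l_mul r_one r_mul hcomm P K
end
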